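/- With notation as in the context, suppose eM is a free 𝒪-module of rank 1, and choose m ∈ M with eM = 𝒪·(em). Then the assignment x ↦ x·m induces a well-defined surjective 𝒪-module homomorphism C_0^λ(T) = eT/(eT ∩ T) → C_0^λ(M) = eM/(eM ∩ M). -/

import Mathlib

/-- The `𝒪`-submodule `e·T` of `T_E`. -/
noncomputable def eTsub (O T TE : Type*) [CommRing O] [CommRing T] [CommRing TE]
    [Algebra O T] [Algebra O TE] [Algebra T TE] [IsScalarTower O T TE] (e : TE) :
    Submodule O TE :=
  Submodule.span O {x : TE | ∃ t : T, x = e * algebraMap T TE t}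

/-- The congruence module `C₀^λ(T) = e·T/(e·T ∩ T)`, formed inside `T_E`. -/
noncomputable abbrev C0T (O T TE : Type*) [CommRing O] [CommRing T] [CommRing TE]
    [Algebra O T] [Algebra O TE] [Algebra T TE] [IsScalarTower O T TE] (e : TE) :=
  ↥(eTsub O T TE e) ⧸
    (Submodule.comap (eTsub O T TE e).subtype
      (eTsub O T TE e ⊓ LinearMap.range ((IsScalarTower.toAlgHom O T TE).toLinearMap)))

/-- The class of `e·t` in `C₀^λ(T)`. -/
noncomputable def clsT (O T TE : Type*) [CommRing O] [CommRing T] [CommRing TE]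
    [Algebra O T] [Algebra O TE] [Algebra T TE] [IsScalarTower O T TE] (e : TE) (t : T) :
    C0T O T TE e :=
  Submodule.Quotient.mk ⟨e * algebraMap T TE t, Submodule.subset_span ⟨t, rfl⟩⟩

/-- The `𝒪`-submodule `e·M` of `M_E`. -/
noncomputable def eMsub {O TE M ME : Type*} [CommRing O] [CommRing TE] [Algebra O TE]
    [AddCommGroup M] [Module O M] [AddCommGroup ME] [Module O ME] [Module TE ME]
    [IsScalarTower O TE ME] (e : TE) (iota : M →ₗ[O] ME) : Submodule O ME :=
  Submodule.span O {x : ME | ∃ m : M, x = e • iota m}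

/-- The congruence module `C₀^λ(M) = e·M/(e·M ∩ M)`, formed inside `M_E`. -/
noncomputable abbrev C0M {O TE M ME : Type*} [CommRing O] [CommRing TE] [Algebra O TE]
    [AddCommGroup M] [Module O M] [AddCommGroup ME] [Module O ME] [Module TE ME]
    [IsScalarTower O TE ME] (e : TE) (iota : M →ₗ[O] ME) :=
  ↥(eMsub e iota) ⧸
    (Submodule.comap (eMsub e iota).subtype (eMsub e iota ⊓ LinearMap.range iota))

/-- The class of `e·m` in `C₀^λ(M)`. -/
noncomputable def clsM {O TE M ME : Type*} [CommRing O] [CommRing TE] [Algebra O TE]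
    [AddCommGroup M] [Module O M] [AddCommGroup ME] [Module O ME] [Module TE ME]
    [IsScalarTower O TE ME] (e : TE) (iota : M →ₗ[O] ME) (m : M) : C0M e iota :=
  Submodule.Quotient.mk ⟨e • iota m, Submodule.subset_span ⟨m, rfl⟩⟩

/-! Multiplication by `m₀` sends `e·T` into `e·M` and `e·T ∩ T` into `e·M ∩ M`, so it descends to
the congruence modules; the induced map is onto because `e·M` is generated by `e·m₀ = (e·1)·m₀`. -/

section CongruenceModuleMap

variable {O T TE M ME : Type*} [CommRing O] [CommRing T] [CommRing TE]
  [Algebra O T] [Algebra O TE] [Algebra T TE] [IsScalarTower O T TE]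
  [AddCommGroup M] [Module O M] [Module T M]
  [AddCommGroup ME] [Module O ME] [Module TE ME] [IsScalarTower O TE ME]
  {iota : M →ₗ[O] ME}

theorem smul_mem_eMsub {e : TE}
    (hiota : ∀ (t : T) (m : M), iota (t • m) = algebraMap T TE t • iota m) (m0 : M)
    {x : TE} (hx : x ∈ eTsub O T TE e) : x • iota m0 ∈ eMsub e iota := by
  induction hx using Submodule.span_induction with
  | mem x hx =>
    obtain ⟨t, rfl⟩ := hx
    exact Submodule.subset_span ⟨t • m0, by rw [hiota, mul_smul]⟩
  | zero => simp
  | add x y _ _ hx hy => rw [add_smul]; exact (eMsub e iota).add_mem hx hy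
  | smul c x _ hx => rw [smul_assoc]; exact (eMsub e iota).smul_mem c hx

variable (e : TE)

noncomputable def eTsubSmul
    (hiota : ∀ (t : T) (m : M), iota (t • m) = algebraMap T TE t • iota m) (m0 : M) :
    eTsub O T TE e →ₗ[O] eMsub e iota :=
  LinearMap.codRestrict (eMsub e iota)
    (((LinearMap.toSpanSingleton TE ME (iota m0)).restrictScalars O).comp
      (eTsub O T TE e).subtype)
    (fun x => smul_mem_eMsub hiota m0 x.2)

theorem coe_eTsubSmul (hiota : ∀ (t : T) (m : M), iota (t • m) = algebraMap T TE t • iota m)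
    (m0 : M) (x : eTsub O T TE e) : (eTsubSmul e hiota m0 x : ME) = (x : TE) • iota m0 :=
  rfl

theorem le_comap_eTsubSmul
    (hiota : ∀ (t : T) (m : M), iota (t • m) = algebraMap T TE t • iota m) (m0 : M) :
    Submodule.comap (eTsub O T TE e).subtype
        (eTsub O T TE e ⊓ LinearMap.range ((IsScalarTower.toAlgHom O T TE).toLinearMap)) ≤
      (Submodule.comap (eMsub e iota).subtype
        (eMsub e iota ⊓ LinearMap.range iota)).comap (eTsubSmul e hiota m0) := by
  rintro x ⟨-, t, ht⟩
  refine ⟨(eTsubSmul e hiota m0 x).2, t • m0, ?_⟩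
  rw [hiota]
  exact congrArg (· • iota m0) ht

noncomputable def C0TSmul
    (hiota : ∀ (t : T) (m : M), iota (t • m) = algebraMap T TE t • iota m) (m0 : M) :
    C0T O T TE e →ₗ[O] C0M e iota :=
  Submodule.mapQ _ _ (eTsubSmul e hiota m0) (le_comap_eTsubSmul e hiota m0)

theorem C0TSmul_mk (hiota : ∀ (t : T) (m : M), iota (t • m) = algebraMap T TE t • iota m)
    (m0 : M) (x : eTsub O T TE e) :
    C0TSmul e hiota m0 (Submodule.Quotient.mk x) =
      Submodule.Quotient.mk (eTsubSmul e hiota m0 x) :=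
  rfl

theorem C0TSmul_clsT (hiota : ∀ (t : T) (m : M), iota (t • m) = algebraMap T TE t • iota m)
    (m0 : M) (t : T) : C0TSmul e hiota m0 (clsT O T TE e t) = clsM e iota (t • m0) := by
  rw [clsT, C0TSmul_mk, clsM]
  congr 1
  ext
  show (e * algebraMap T TE t) • iota m0 = e • iota (t • m0)
  rw [hiota, mul_smul]

theorem C0TSmul_surjective
    (hiota : ∀ (t : T) (m : M), iota (t • m) = algebraMap T TE t • iota m) (m0 : M)
    (hm0 : ∀ x ∈ eMsub e iota, ∃ c : O, x = c • (e • iota m0)) :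
    Function.Surjective (C0TSmul e hiota m0) := by
  rintro y
  obtain ⟨⟨v, hv⟩, rfl⟩ := Submodule.Quotient.mk_surjective _ y
  obtain ⟨c, rfl⟩ := hm0 v hv
  have he : e ∈ eTsub O T TE e := Submodule.subset_span ⟨1, by rw [map_one, mul_one]⟩
  refine ⟨Submodule.Quotient.mk (c • ⟨e, he⟩ : eTsub O T TE e), ?_⟩
  rw [C0TSmul_mk]
  congr 1
  ext
  rw [coe_eTsubSmul, SetLike.val_smul, smul_assoc]

end CongruenceModuleMap

theorem statement7_general
    {O : Type*} [CommRing O]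
    {T : Type*} [CommRing T]
    [Algebra O T]
    {TE : Type*} [CommRing TE] [Algebra T TE] [Algebra O TE]
    [IsScalarTower O T TE]
    (e : TE)
    {M : Type*} [AddCommGroup M] [Module O M] [Module T M]
    {ME : Type*} [AddCommGroup ME] [Module O ME] [Module TE ME] [IsScalarTower O TE ME]
    (iota : M →ₗ[O] ME)
    (hiota : ∀ (t : T) (m : M), iota (t • m) = algebraMap T TE t • iota m)
    (m0 : M) (hm0 : ∀ x ∈ eMsub e iota, ∃ c : O, x = c • (e • iota m0)) :
    ∃ f : (C0T O T TE e) →ₗ[O] (C0M e iota),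
      Function.Surjective f ∧ ∀ t : T, f (clsT O T TE e t) = clsM e iota (t • m0) :=
  ⟨C0TSmul e hiota m0, C0TSmul_surjective e hiota m0 hm0, C0TSmul_clsT e hiota m0⟩

/-- In the standard congruence-module setup, if `e·M` is a free
`𝒪`-module of rank `1`, generated by `e·m₀` for some `m₀ ∈ M`, then `x ↦ x·m₀` induces a
well-defined surjective `𝒪`-linear map `C₀^λ(T) = eT/(eT ∩ T) → C₀^λ(M) = eM/(eM ∩ M)`. -/
theorem statement7
    {O : Type*} [CommRing O] [IsDomain O] [IsDiscreteValuationRing O]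
    [IsAdicComplete (IsLocalRing.maximalIdeal O) O]
    {E : Type*} [Field E] [Algebra O E] [IsFractionRing O E]
    {T : Type*} [CommRing T] [IsReduced T] [IsLocalRing T]
    [Algebra O T] [Module.Finite O T] [Module.Flat O T]
    {TE : Type*} [CommRing TE] [Algebra T TE] [Algebra O TE] [Algebra E TE]
    [IsScalarTower O T TE] [IsScalarTower O E TE]
    [IsLocalization (Algebra.algebraMapSubmonoid T (nonZeroDivisors O)) TE]
    (lam : T →ₐ[O] O)
    (lamE : TE →ₐ[E] E) (e : TE)
    (hlamE : ∀ t : T, lamE (algebraMap T TE t) = algebraMap O E (lam t))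
    (he1 : lamE e = 1)
    (he2 : ∀ P : Ideal TE, P.IsPrime → P ≠ RingHom.ker lamE → e ∈ P)
    {M : Type*} [AddCommGroup M] [Module O M] [Module T M] [IsScalarTower O T M]
    [Module.Finite T M] [Module.Free O M]
    {ME : Type*} [AddCommGroup ME] [Module O ME] [Module TE ME] [IsScalarTower O TE ME]
    (iota : M →ₗ[O] ME) [IsLocalizedModule (nonZeroDivisors O) iota]
    (hiota : ∀ (t : T) (m : M), iota (t • m) = algebraMap T TE t • iota m)
    (m0 : M) (hm0 : ∀ x ∈ eMsub e iota, ∃ c : O, x = c • (e • iota m0)) :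
    ∃ f : (C0T O T TE e) →ₗ[O] (C0M e iota),
      Function.Surjective f ∧ ∀ t : T, f (clsT O T TE e t) = clsM e iota (t • m0) :=
  statement7_general e iota hiota m0 hm0
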